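/- Let α > 2, β > 0, d > 0, and let H, H̃ be independent exponential random variables with rate 1. Then ∫_{ℝ²} P[H d^{-α} < β H̃ |X|^{-α}] dX = β^{2/α} · π Γ(1+2/α) Γ(1-2/α) · d², where the integral is with respect to Lebesgue measure on the plane. -/

import Mathlib

/-!
By Tonelli, integrating the outage probability over the plane is the same as taking the
expectation of the area of the random region `{X : H d^{-α} < β H̃ ‖X‖^{-α}}`. For positive
fading values this region is the punctured disc of radius `d (β H̃ / H)^{1/α}`, so the answer is
`π d² β^{2/α} E[H̃^{2/α}] E[H^{-2/α}]` by independence, and the moments of an exponential variable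
are `E[H^q] = Γ(1 + q)` for `q > -1`; the negative moment is finite because `α > 2`.
-/

open MeasureTheory ProbabilityTheory Real Set

lemma expMeasure_Iic_zero (r : ℝ) : expMeasure r (Iic 0) = 0 := by
  rw [expMeasure, gammaMeasure, withDensity_apply _ measurableSet_Iic,
    setLIntegral_congr Iio_ae_eq_Iic.symm]
  exact lintegral_gammaPDF_of_nonpos le_rfl

lemma ae_expMeasure_pos (r : ℝ) : ∀ᵐ x ∂expMeasure r, 0 < x := by
  rw [ae_iff]
  simp only [not_lt]
  exact expMeasure_Iic_zero r

lemma lintegral_rpow_expMeasure {r q : ℝ} (hr : 0 < r) (hq : -1 < q) :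
    ∫⁻ x, ENNReal.ofReal (x ^ q) ∂expMeasure r = ENNReal.ofReal (r ^ (-q) * Gamma (q + 1)) := by
  have hpos : (expMeasure r).restrict (Ioi 0) = expMeasure r :=
    Measure.restrict_eq_self_of_ae_mem (ae_expMeasure_pos r)
  rw [← hpos, expMeasure, gammaMeasure, restrict_withDensity measurableSet_Ioi,
    lintegral_withDensity_eq_lintegral_mul (f := gammaPDF 1 r) _
      (measurable_gammaPDFReal 1 r).ennreal_ofReal (by fun_prop)]
  have hpdf : ∀ x ∈ Ioi (0 : ℝ), (gammaPDF 1 r * fun x ↦ ENNReal.ofReal (x ^ q)) x =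
      ENNReal.ofReal (r * (x ^ q * rexp (-r * x ^ (1 : ℝ)))) := by
    intro x hx
    change exponentialPDF r x * _ = _
    rw [exponentialPDF_of_nonneg (le_of_lt hx), ← ENNReal.ofReal_mul (by positivity), rpow_one,
      neg_mul]
    ring_nf
  rw [setLIntegral_congr_fun measurableSet_Ioi hpdf, ← ofReal_integral_eq_lintegral_ofReal]
  · rw [integral_const_mul, integral_rpow_mul_exp_neg_mul_rpow one_pos hq hr,
      show -q = 1 + -(q + 1) by ring, rpow_add hr, rpow_one]
    simp only [div_one, mul_one, mul_assoc]
  · exact (integrableOn_rpow_mul_exp_neg_mul_rpow hq one_pos hr).const_mul r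
  · filter_upwards [ae_restrict_mem measurableSet_Ioi] with x (hx : 0 < x)
    positivity

lemma lintegral_rpow_of_map_eq_expMeasure {Ω : Type*} [MeasurableSpace Ω] {μ : Measure Ω}
    {X : Ω → ℝ} {r q : ℝ} (hX : Measurable X) (hlaw : μ.map X = expMeasure r) (hr : 0 < r)
    (hq : -1 < q) :
    ∫⁻ ω, ENNReal.ofReal (X ω ^ q) ∂μ = ENNReal.ofReal (r ^ (-q) * Gamma (q + 1)) := by
  rw [← lintegral_map (f := fun x ↦ ENNReal.ofReal (x ^ q)) (by fun_prop) hX, hlaw,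
    lintegral_rpow_expMeasure hr hq]

lemma integral_toReal_measure_slice_eq {α β : Type*} [MeasurableSpace α] [MeasurableSpace β]
    (μ : Measure α) [IsFiniteMeasure μ] (ν : Measure β) [SFinite ν] {P : α → β → Prop}
    (hP : MeasurableSet {p : α × β | P p.1 p.2}) :
    ∫ y, (μ {x | P x y}).toReal ∂ν = (∫⁻ x, ν {y | P x y} ∂μ).toReal := by
  rw [integral_toReal (f := fun y ↦ μ {x | P x y}) (measurable_measure_prodMk_right hP).aemeasurable
    (ae_of_all _ fun _ ↦ measure_lt_top _ _)]
  exact congrArg ENNReal.toReal ((Measure.prod_apply_symm hP).symm.trans (Measure.prod_apply hP))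

-- At `X = 0` the junk value `0 ^ (-α) = 0` excludes the centre.
lemma setOf_lt_mul_norm_rpow_neg {E : Type*} [NormedAddCommGroup E] {a c α : ℝ} (hα : 0 < α)
    (ha : 0 < a) (hc : 0 < c) :
    {X : E | a < c * ‖X‖ ^ (-α)} = Metric.ball 0 ((c / a) ^ α⁻¹) \ {0} := by
  ext X
  rcases eq_or_ne X 0 with rfl | hX
  · simp [zero_rpow (neg_ne_zero.mpr hα.ne'), ha.le]
  have hr : 0 < ‖X‖ := norm_pos_iff.mpr hX
  simp only [mem_ofPred_eq, mem_sdiff, Metric.mem_ball, dist_zero_right, mem_singleton_iff, hX,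
    not_false_eq_true, and_true]
  rw [lt_rpow_inv_iff_of_pos hr.le (by positivity) hα, rpow_neg hr.le, ← div_eq_mul_inv,
    lt_div_iff₀ (by positivity), lt_div_iff₀ ha, mul_comm]

lemma volume_setOf_lt_mul_norm_rpow_neg {a c α : ℝ} (hα : 0 < α) (ha : 0 < a) (hc : 0 < c) :
    volume {X : EuclideanSpace ℝ (Fin 2) | a < c * ‖X‖ ^ (-α)} =
      ENNReal.ofReal (π * (c / a) ^ (2 / α)) := by
  rw [setOf_lt_mul_norm_rpow_neg hα ha hc, measure_sdiff_null (measure_singleton 0),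
    EuclideanSpace.volume_ball_fin_two, ← ENNReal.ofReal_pow (by positivity),
    ← ENNReal.ofReal_mul (by positivity), mul_comm, ← rpow_mul_natCast (by positivity)]
  congr 3
  push_cast
  ring

lemma volume_setOf_mul_rpow_neg_lt_mul_norm_rpow_neg {α β d h h' : ℝ} (hα : 0 < α) (hβ : 0 < β)
    (hd : 0 < d) (hh : 0 < h) (hh' : 0 < h') :
    volume {X : EuclideanSpace ℝ (Fin 2) | h * d ^ (-α) < β * h' * ‖X‖ ^ (-α)} =
      ENNReal.ofReal (β ^ (2 / α) * π * d ^ 2) *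
        (ENNReal.ofReal (h' ^ (2 / α)) * ENNReal.ofReal (h ^ (-(2 / α)))) := by
  rw [volume_setOf_lt_mul_norm_rpow_neg hα (by positivity) (by positivity),
    ← ENNReal.ofReal_mul (by positivity), ← ENNReal.ofReal_mul (by positivity),
    div_rpow (by positivity) (by positivity), mul_rpow hβ.le hh'.le,
    mul_rpow hh.le (by positivity), ← rpow_mul hd.le, rpow_neg hh.le,
    show -α * (2 / α) = -2 by field_simp, rpow_neg hd.le]
  norm_cast
  field_simp

theorem stmt_4 {Ω : Type*} [MeasurableSpace Ω] (μ : Measure Ω) [IsProbabilityMeasure μ]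
    (H H' : Ω → ℝ) (hH : Measurable H) (hH' : Measurable H')
    (hlawH : Measure.map H μ = expMeasure 1) (hlawH' : Measure.map H' μ = expMeasure 1)
    (hindep : IndepFun H H' μ)
    (α β d : ℝ) (hα : 2 < α) (hβ : 0 < β) (hd : 0 < d) :
    ∫ X : EuclideanSpace ℝ (Fin 2),
        (μ {ω | H ω * d ^ (-α) < β * H' ω * ‖X‖ ^ (-α)}).toReal =
      β ^ (2 / α) * (π * Real.Gamma (1 + 2 / α) * Real.Gamma (1 - 2 / α)) * d ^ 2 := by
  have hα0 : 0 < α := by linarith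
  have hp0 : 0 < 2 / α := by positivity
  have hp1 : 2 / α < 1 := by rw [div_lt_one hα0]; linarith
  have hS : MeasurableSet {x : Ω × EuclideanSpace ℝ (Fin 2) |
      H x.1 * d ^ (-α) < β * H' x.1 * ‖x.2‖ ^ (-α)} :=
    measurableSet_lt (by fun_prop) (by fun_prop)
  have hslice : ∀ᵐ ω ∂μ, volume {X : EuclideanSpace ℝ (Fin 2) | H ω * d ^ (-α) < β * H' ω * ‖X‖ ^ (-α)} =
      ENNReal.ofReal (β ^ (2 / α) * π * d ^ 2) *
        (ENNReal.ofReal (H' ω ^ (2 / α)) * ENNReal.ofReal (H ω ^ (-(2 / α)))) := by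
    filter_upwards [ae_of_ae_map hH.aemeasurable (hlawH ▸ ae_expMeasure_pos 1),
      ae_of_ae_map hH'.aemeasurable (hlawH' ▸ ae_expMeasure_pos 1)] with ω hω hω'
    exact volume_setOf_mul_rpow_neg_lt_mul_norm_rpow_neg hα0 hβ hd hω hω'
  have hind : IndepFun (fun ω ↦ ENNReal.ofReal (H' ω ^ (2 / α)))
      (fun ω ↦ ENNReal.ofReal (H ω ^ (-(2 / α)))) μ :=
    hindep.symm.comp (φ := fun x ↦ ENNReal.ofReal (x ^ (2 / α)))
      (ψ := fun x ↦ ENNReal.ofReal (x ^ (-(2 / α)))) (by fun_prop) (by fun_prop)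
  have hΓ₁ : 0 < Gamma (1 + 2 / α) := Gamma_pos_of_pos (by linarith)
  have hΓ₂ : 0 < Gamma (1 - 2 / α) := Gamma_pos_of_pos (by linarith)
  rw [integral_toReal_measure_slice_eq μ volume hS, lintegral_congr_ae hslice,
    lintegral_const_mul _ (by fun_prop),
    lintegral_mul_eq_lintegral_mul_lintegral_of_indepFun'' (by fun_prop) (by fun_prop) hind,
    lintegral_rpow_of_map_eq_expMeasure hH' hlawH' one_pos (by linarith),
    lintegral_rpow_of_map_eq_expMeasure hH hlawH one_pos (by linarith),
    one_rpow, one_rpow, one_mul, one_mul, add_comm _ (1 : ℝ), neg_add_eq_sub,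
    ← ENNReal.ofReal_mul hΓ₁.le, ← ENNReal.ofReal_mul (by positivity),
    ENNReal.toReal_ofReal (by positivity)]
  ring
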